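/- (Aggregation.) Let φ_1,…,φ_N : {−1,+1}^n → ℝ each be stable with E_ε φ_j(ε) ≥ 1/2 for all j (ε uniform on {−1,+1}^n). Then the pointwise minimum y ↦ min_{1 ≤ j ≤ N} φ_j(y) is stable, and E_ε[min_{1 ≤ j ≤ N} φ_j(ε)] ≥ 1/2 − √(log N / (2n)). Consequently φ(y) = min_j φ_j(y) + √(log N / (2n)) is stable with E_ε φ(ε) ≥ 1/2. -/

import Mathlib

open Finset

noncomputable section

/-- The real ±1 value of a Boolean bit (`true ↦ +1`, `false ↦ -1`). -/
def sgn (b : Bool) : ℝ := if b then 1 else -1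

/-- The history (prefix) of the sequence `y` strictly before time `t`. -/
def pref {n : ℕ} (y : Fin n → Bool) (t : Fin n) : Fin t.1 → Bool :=
  fun s => y ⟨s.1, s.2.trans t.2⟩

/-- Expected proportion of mistakes `μ_A(y)` of the randomized algorithm whose prediction at
round `t` is a ±1 random variable with mean `q t (pref y t) ∈ [-1,1]`. -/
def mistakes (n : ℕ) (q : (t : Fin n) → (Fin t.1 → Bool) → ℝ) (y : Fin n → Bool) : ℝ :=
  (1 / n) * ∑ t : Fin n, (1 - sgn (y t) * q t (pref y t)) / 2

/-- Expectation of `φ` under the uniform distribution on `{−1,+1}^n`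
(sign sequences encoded as Boolean sequences). -/
def unifExp (n : ℕ) (φ : (Fin n → Bool) → ℝ) : ℝ :=
  (∑ y : Fin n → Bool, φ y) / 2 ^ n

/-- `φ` is stable: flipping any single coordinate changes its value by at most `1/n`. -/
def Stable (n : ℕ) (φ : (Fin n → Bool) → ℝ) : Prop :=
  ∀ (y : Fin n → Bool) (t : Fin n),
    |φ (Function.update y t true) - φ (Function.update y t false)| ≤ 1 / n


/-- Two-point Hoeffding lemma. -/
lemma two_point (a b c : ℝ) (h : |a - b| ≤ c) :
    Real.exp a + Real.exp b ≤ 2 * Real.exp ((a + b) / 2 + c ^ 2 / 8) := by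
  have key : Real.exp a + Real.exp b
      = 2 * Real.exp ((a + b) / 2) * Real.cosh ((a - b) / 2) := by
    rw [Real.cosh_eq]
    have e1 : Real.exp ((a+b)/2) * Real.exp ((a-b)/2) = Real.exp a := by
      rw [← Real.exp_add]; congr 1; ring
    have e2 : Real.exp ((a+b)/2) * Real.exp (-((a-b)/2)) = Real.exp b := by
      rw [← Real.exp_add]; congr 1; ring
    linear_combination -e1 - e2
  rw [key, Real.exp_add]
  have h1 : Real.cosh ((a - b) / 2) ≤ Real.exp (c ^ 2 / 8) := by
    refine (Real.cosh_le_exp_half_sq _).trans (Real.exp_le_exp.2 ?_)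
    have : |a - b| ^ 2 ≤ c ^ 2 :=
      pow_le_pow_left₀ (abs_nonneg _) h 2
    rw [sq_abs] at this
    nlinarith
  have h2 : (0 : ℝ) < 2 * Real.exp ((a + b) / 2) := by positivity
  calc 2 * Real.exp ((a + b) / 2) * Real.cosh ((a - b) / 2)
      ≤ 2 * Real.exp ((a + b) / 2) * Real.exp (c ^ 2 / 8) := by
        exact mul_le_mul_of_nonneg_left h1 (le_of_lt h2)
    _ = 2 * (Real.exp ((a + b) / 2) * Real.exp (c ^ 2 / 8)) := by ring

/-- Splitting a sum over the (n+1)-cube. -/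
lemma sum_cube_succ {n : ℕ} (g : (Fin (n + 1) → Bool) → ℝ) :
    ∑ y : Fin (n + 1) → Bool, g y
      = ∑ z : Fin n → Bool, (g (Fin.cons true z) + g (Fin.cons false z)) := by
  rw [← Fintype.sum_equiv (Fin.consEquiv fun _ => Bool) (fun p => g (Fin.cons p.1 p.2)) g
      (fun p => rfl)]
  rw [Fintype.sum_prod_type_right]
  congr 1; funext z
  rw [Fintype.sum_bool]

/-- Azuma–Hoeffding MGF bound on the Boolean cube. -/
lemma mgf_bound : ∀ (n : ℕ) (c : ℝ), 0 ≤ c → ∀ (φ : (Fin n → Bool) → ℝ),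
    (∀ y t, |φ (Function.update y t true) - φ (Function.update y t false)| ≤ c) →
    ∑ y : Fin n → Bool, Real.exp (φ y)
      ≤ 2 ^ n * Real.exp ((∑ y : Fin n → Bool, φ y) / 2 ^ n + n * c ^ 2 / 8) := by
  intro n
  induction n with
  | zero =>
    intro c hc φ hφ
    simp [Fintype.sum_unique]
  | succ n ih =>
    intro c hc φ hφ
    set ψ : Bool → (Fin n → Bool) → ℝ := fun b z => φ (Fin.cons b z) with hψ
    set χ : (Fin n → Bool) → ℝ := fun z => (ψ true z + ψ false z) / 2 with hχ
    have hχstab : ∀ z t, |χ (Function.update z t true) - χ (Function.update z t false)| ≤ c := by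
      intro z t
      have hb : ∀ b : Bool, |ψ b (Function.update z t true) - ψ b (Function.update z t false)| ≤ c := by
        intro b
        have e1 : ∀ v, ψ b (Function.update z t v) =
            φ (Function.update (Fin.cons b z) t.succ v) := by
          intro v; rw [hψ]; simp only []; rw [Fin.cons_update]
        rw [e1, e1]; exact hφ _ _
      have h1 := hb true
      have h2 := hb false
      rw [hχ]
      simp only []
      rw [abs_le] at h1 h2 ⊢
      constructor <;> [nlinarith; nlinarith]
    have hsum : ∑ y : Fin (n+1) → Bool, φ y = 2 * ∑ z, χ z := by
      rw [sum_cube_succ φ, Finset.mul_sum]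
      refine Finset.sum_congr rfl fun z _ => ?_
      simp only [hχ, hψ]; ring
    have step1 : ∑ y : Fin (n+1) → Bool, Real.exp (φ y)
        ≤ ∑ z : Fin n → Bool, 2 * Real.exp (χ z + c ^ 2 / 8) := by
      rw [sum_cube_succ (fun y => Real.exp (φ y))]
      refine Finset.sum_le_sum fun z _ => ?_
      have hd : |ψ true z - ψ false z| ≤ c := by
        have e1 : ∀ b : Bool, ψ b z = φ (Function.update (Fin.cons false z) 0 b) := by
          intro b; rw [hψ]; simp only []; rw [Fin.update_cons_zero]
        rw [e1 true, e1 false]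
        simpa using hφ (Fin.cons false z) 0
      have := two_point (ψ true z) (ψ false z) c hd
      simpa [hχ] using this
    have step2 : ∑ z : Fin n → Bool, Real.exp (χ z)
        ≤ 2 ^ n * Real.exp ((∑ z, χ z) / 2 ^ n + n * c ^ 2 / 8) := ih c hc χ hχstab
    calc ∑ y : Fin (n+1) → Bool, Real.exp (φ y)
        ≤ ∑ z : Fin n → Bool, 2 * Real.exp (χ z + c ^ 2 / 8) := step1
      _ = 2 * Real.exp (c ^ 2 / 8) * ∑ z, Real.exp (χ z) := by
          rw [Finset.mul_sum]
          refine Finset.sum_congr rfl fun z _ => ?_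
          rw [Real.exp_add]; ring
      _ ≤ 2 * Real.exp (c ^ 2 / 8) * (2 ^ n * Real.exp ((∑ z, χ z) / 2 ^ n + n * c ^ 2 / 8)) := by
          refine mul_le_mul_of_nonneg_left step2 (by positivity)
      _ = 2 ^ (n+1) * Real.exp ((∑ y : Fin (n+1) → Bool, φ y) / 2 ^ (n+1) + ((n+1 : ℕ) : ℝ) * c ^ 2 / 8) := by
          have h2 : (2:ℝ) ^ n ≠ 0 := by positivity
          rw [hsum]
          generalize (∑ z : Fin n → Bool, χ z) = S
          rw [show ((2:ℝ)^(n+1)) = 2^n*2 from pow_succ 2 n,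
            show (2 * S) / (2^n * 2) + ((n+1 : ℕ) : ℝ) * c^2/8
              = c^2/8 + (S/2^n + (n:ℝ) * c^2/8) by push_cast; field_simp; ring]
          simp only [Real.exp_add]
          ring

lemma abs_inf'_sub {N : ℕ} (hNe : (Finset.univ : Finset (Fin N)).Nonempty)
    (f g : Fin N → ℝ) (c : ℝ) (h : ∀ j, |f j - g j| ≤ c) :
    |univ.inf' hNe f - univ.inf' hNe g| ≤ c := by
  rw [abs_le]
  constructor
  · obtain ⟨j, _, hj⟩ := Finset.exists_mem_eq_inf' hNe f
    have h1 : univ.inf' hNe g ≤ g j := Finset.inf'_le _ (Finset.mem_univ j)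
    have h2 := abs_le.1 (h j)
    rw [hj]; linarith [h2.1]
  · obtain ⟨j, _, hj⟩ := Finset.exists_mem_eq_inf' hNe g
    have h1 : univ.inf' hNe f ≤ f j := Finset.inf'_le _ (Finset.mem_univ j)
    have h2 := abs_le.1 (h j)
    rw [hj]; linarith [h2.2]

lemma avg_log_le (n : ℕ) (S : (Fin n → Bool) → ℝ) (hS : ∀ y, 0 < S y) :
    (∑ y : Fin n → Bool, Real.log (S y)) / 2 ^ n
      ≤ Real.log ((∑ y : Fin n → Bool, S y) / 2 ^ n) := by
  have hcard : (Finset.univ : Finset (Fin n → Bool)).card = 2 ^ n := by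
    simp [Finset.card_univ, Fintype.card_fun]
  have h2 : (0:ℝ) < 2 ^ n := by positivity
  have hw : ∑ _y : Fin n → Bool, ((2:ℝ) ^ n)⁻¹ = 1 := by
    rw [Finset.sum_const, hcard, nsmul_eq_mul]
    push_cast
    field_simp
  have hj := (strictConcaveOn_log_Ioi.concaveOn).le_map_sum
    (t := (Finset.univ : Finset (Fin n → Bool))) (w := fun _ => ((2:ℝ)^n)⁻¹) (p := S)
    (fun _ _ => by positivity) hw (fun y _ => hS y)
  simpa [smul_eq_mul, div_eq_inv_mul, Finset.mul_sum] using hj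

lemma main_bound (n N : ℕ) (hn : 1 ≤ n) (hN2 : 2 ≤ N)
    (hne : (Finset.univ : Finset (Fin N)).Nonempty)
    (φ : Fin N → (Fin n → Bool) → ℝ)
    (hstab : ∀ j, Stable n (φ j)) (hexp : ∀ j, 1 / 2 ≤ unifExp n (φ j)) :
    1 / 2 - Real.sqrt (Real.log N / (2 * n)) ≤
      unifExp n (fun y => univ.inf' hne (fun j => φ j y)) := by
  have hnpos : (0:ℝ) < n := by exact_mod_cast hn
  have hlog : (0:ℝ) < Real.log N := Real.log_pos (by exact_mod_cast hN2)
  have hNpos : (0:ℝ) < N := by positivity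
  set lam : ℝ := Real.sqrt (8 * n * Real.log N) with hlam
  have hlampos : 0 < lam := Real.sqrt_pos.2 (by positivity)
  have hlamsq : lam ^ 2 = 8 * n * Real.log N := Real.sq_sqrt (by positivity)
  set m : (Fin n → Bool) → ℝ := fun y => univ.inf' hne (fun j => φ j y) with hm
  set S : (Fin n → Bool) → ℝ := fun y => ∑ j, Real.exp (-lam * φ j y) with hS
  have hSpos : ∀ y, 0 < S y :=
    fun y => Finset.sum_pos (fun j _ => Real.exp_pos _) hne
  have h2n : (0:ℝ) < 2 ^ n := by positivity
  -- softmin: pointwise bound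
  have key1 : ∀ y, -(Real.log (S y)) / lam ≤ m y := by
    intro y
    obtain ⟨j, _, hj⟩ := Finset.exists_mem_eq_inf' hne (fun j => φ j y)
    have h1 : Real.exp (-lam * m y) ≤ S y := by
      rw [hm]
      simp only []
      rw [hj]
      exact Finset.single_le_sum (f := fun j => Real.exp (-lam * φ j y))
        (fun i _ => (Real.exp_pos _).le) (Finset.mem_univ j)
    have h2 : -lam * m y ≤ Real.log (S y) := (Real.le_log_iff_exp_le (hSpos y)).2 h1
    rw [div_le_iff₀ hlampos]
    nlinarith
  -- Jensen
  have key2 := avg_log_le n S hSpos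
  -- mgf bound per j, summed
  have key3 : (∑ y, S y) / 2 ^ n ≤ N * Real.exp (-(lam / 2) + Real.log N) := by
    have hperj : ∀ j : Fin N, ∑ y : Fin n → Bool, Real.exp (-lam * φ j y)
        ≤ 2 ^ n * Real.exp (-(lam / 2) + Real.log N) := by
      intro j
      have hdiff : ∀ (y : Fin n → Bool) (t : Fin n),
          |(-lam * φ j (Function.update y t true))
            - (-lam * φ j (Function.update y t false))| ≤ lam / n := by
        intro y t
        rw [show -lam * φ j (Function.update y t true) - -lam * φ j (Function.update y t false)
            = -lam * (φ j (Function.update y t true) - φ j (Function.update y t false)) by ring,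
          abs_mul, abs_neg, abs_of_pos hlampos]
        refine le_trans (mul_le_mul_of_nonneg_left (hstab j y t) hlampos.le) ?_
        rw [mul_one_div]
      have hmgf := mgf_bound n (lam / n) (by positivity) (fun y => -lam * φ j y) hdiff
      refine hmgf.trans ?_
      have hmean : (∑ y : Fin n → Bool, -lam * φ j y) / 2 ^ n = -lam * unifExp n (φ j) := by
        rw [unifExp, ← Finset.mul_sum, mul_div_assoc]
      have hexpo : (∑ y : Fin n → Bool, -lam * φ j y) / 2 ^ n + n * (lam / n) ^ 2 / 8
          ≤ -(lam / 2) + Real.log N := by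
        rw [hmean, show (n:ℝ) * (lam / n) ^ 2 / 8 = lam ^ 2 / (8 * n) by field_simp,
          hlamsq, show 8 * (n:ℝ) * Real.log N / (8 * n) = Real.log N by field_simp]
        have := hexp j
        nlinarith
      exact mul_le_mul_of_nonneg_left (Real.exp_le_exp.2 hexpo) h2n.le
    calc (∑ y, S y) / 2 ^ n
        = (∑ j : Fin N, ∑ y : Fin n → Bool, Real.exp (-lam * φ j y)) / 2 ^ n := by
          rw [hS, Finset.sum_comm]
      _ ≤ (∑ _j : Fin N, 2 ^ n * Real.exp (-(lam / 2) + Real.log N)) / 2 ^ n := by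
          gcongr with j _
          exact hperj j
      _ = N * Real.exp (-(lam / 2) + Real.log N) := by
          rw [Finset.sum_const, Finset.card_univ, Fintype.card_fin, nsmul_eq_mul]
          field_simp
  have key4 : Real.log ((∑ y, S y) / 2 ^ n) ≤ Real.log N + (-(lam / 2) + Real.log N) := by
    refine (Real.log_le_log (by positivity) key3).trans_eq ?_
    rw [Real.log_mul (ne_of_gt hNpos) (Real.exp_ne_zero _), Real.log_exp]
  have hsqrt : Real.sqrt (Real.log N / (2 * n)) = 2 * Real.log N / lam := by
    rw [eq_div_iff (ne_of_gt hlampos), hlam,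
      ← Real.sqrt_mul (by positivity : (0:ℝ) ≤ Real.log N / (2 * n)),
      show Real.log N / (2 * (n:ℝ)) * (8 * n * Real.log N) = (2 * Real.log N) ^ 2 by
        field_simp; ring]
    exact Real.sqrt_sq (by positivity)
  have havg : -(Real.log ((∑ y, S y) / 2 ^ n)) / lam ≤ unifExp n m := by
    have e : ∑ y : Fin n → Bool, -(Real.log (S y)) / lam
        = -(∑ y : Fin n → Bool, Real.log (S y)) / lam := by
      rw [← Finset.sum_div, ← Finset.sum_neg_distrib]
    calc -(Real.log ((∑ y, S y) / 2 ^ n)) / lam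
        ≤ -((∑ y, Real.log (S y)) / 2 ^ n) / lam := by
          apply div_le_div_of_nonneg_right ?_ hlampos.le |>.trans_eq rfl
          exact neg_le_neg key2
      _ = (∑ y : Fin n → Bool, -(Real.log (S y)) / lam) / 2 ^ n := by rw [e]; ring
      _ ≤ (∑ y : Fin n → Bool, m y) / 2 ^ n := by
          gcongr with y _
          exact key1 y
      _ = unifExp n m := rfl
  calc 1 / 2 - Real.sqrt (Real.log N / (2 * n))
      = -(Real.log N + (-(lam / 2) + Real.log N)) / lam := by
        rw [hsqrt]; field_simp; ring
    _ ≤ -(Real.log ((∑ y, S y) / 2 ^ n)) / lam := by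
        apply div_le_div_of_nonneg_right ?_ hlampos.le |>.trans_eq rfl
        exact neg_le_neg key4
    _ ≤ unifExp n m := havg

/-- Aggregation: the pointwise minimum of `N` stable functions each with mean
`≥ 1/2` is stable and has mean `≥ 1/2 − √(log N/(2n))`; consequently the minimum plus
`√(log N/(2n))` is stable and has mean `≥ 1/2`. -/
theorem aggregation (n N : ℕ) (hn : 1 ≤ n) (hN : 1 ≤ N)
    (φ : Fin N → (Fin n → Bool) → ℝ)
    (hstab : ∀ j, Stable n (φ j)) (hexp : ∀ j, 1 / 2 ≤ unifExp n (φ j)) :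
    Stable n (fun y => Finset.univ.inf' ⟨⟨0, hN⟩, Finset.mem_univ _⟩ (fun j => φ j y)) ∧
    1 / 2 - Real.sqrt (Real.log N / (2 * n)) ≤
      unifExp n (fun y => Finset.univ.inf' ⟨⟨0, hN⟩, Finset.mem_univ _⟩ (fun j => φ j y)) ∧
    Stable n (fun y =>
      Finset.univ.inf' ⟨⟨0, hN⟩, Finset.mem_univ _⟩ (fun j => φ j y) +
        Real.sqrt (Real.log N / (2 * n))) ∧
    1 / 2 ≤ unifExp n (fun y =>
      Finset.univ.inf' ⟨⟨0, hN⟩, Finset.mem_univ _⟩ (fun j => φ j y) +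
        Real.sqrt (Real.log N / (2 * n))) := by
  have hne : (Finset.univ : Finset (Fin N)).Nonempty := ⟨⟨0, hN⟩, Finset.mem_univ _⟩
  have hstabm : Stable n
      (fun y => Finset.univ.inf' ⟨⟨0, hN⟩, Finset.mem_univ _⟩ (fun j => φ j y)) := by
    intro y t
    exact abs_inf'_sub _ _ _ _ (fun j => hstab j y t)
  have hmain : 1 / 2 - Real.sqrt (Real.log N / (2 * n)) ≤
      unifExp n (fun y => Finset.univ.inf' ⟨⟨0, hN⟩, Finset.mem_univ _⟩ (fun j => φ j y)) := by
    rcases eq_or_lt_of_le hN with h1 | h2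
    · have hNe : N = 1 := h1.symm
      subst hNe
      have hm1 : ∀ y,
          (Finset.univ.inf' (⟨⟨0, hN⟩, Finset.mem_univ _⟩ :
            (Finset.univ : Finset (Fin 1)).Nonempty) (fun j => φ j y)) = φ ⟨0, hN⟩ y := by
        intro y
        refine le_antisymm (Finset.inf'_le _ (Finset.mem_univ _)) (Finset.le_inf' _ _ ?_)
        intro j _
        have hj : j = ⟨0, hN⟩ := Fin.ext (by omega)
        rw [hj]
      have heq : unifExp n
          (fun y => Finset.univ.inf' ⟨⟨0, hN⟩, Finset.mem_univ _⟩ (fun j => φ j y))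
          = unifExp n (φ ⟨0, hN⟩) := by
        unfold unifExp
        rw [Finset.sum_congr rfl fun y _ => hm1 y]
      rw [heq]
      simp only [Nat.cast_one, Real.log_one, zero_div, Real.sqrt_zero, sub_zero]
      exact hexp _
    · exact main_bound n N hn h2 hne φ hstab hexp
  have hsplit : unifExp n (fun y =>
        Finset.univ.inf' ⟨⟨0, hN⟩, Finset.mem_univ _⟩ (fun j => φ j y) +
          Real.sqrt (Real.log N / (2 * n)))
      = unifExp n (fun y =>
          Finset.univ.inf' ⟨⟨0, hN⟩, Finset.mem_univ _⟩ (fun j => φ j y)) +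
        Real.sqrt (Real.log N / (2 * n)) := by
    unfold unifExp
    rw [Finset.sum_add_distrib, Finset.sum_const, Finset.card_univ, Fintype.card_fun,
      Fintype.card_bool, Fintype.card_fin, nsmul_eq_mul]
    have h2n : ((2:ℝ)) ^ n ≠ 0 := by positivity
    push_cast
    field_simp
  refine ⟨hstabm, hmain, ?_, ?_⟩
  · intro y t
    simpa using hstabm y t
  · rw [hsplit]
    linarith
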